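/- For a Young diagram λ with n boxes, the number of standard Young tableaux satisfies Σ_{μ = λ + □} f^μ = (n+1) · f^λ, where the sum runs over all Young diagrams μ obtained from λ by adding one box. -/

import Mathlib

/-!
The Young lattice is a distributive lattice graded by the number of boxes in which every diagram
has exactly one more upper cover than lower covers: the rows where a box can be added are row `0`
and the rows just below those where a box can be removed. In such a lattice, join and meet
exchange the diamonds `ν ⋖ μ ⋗ λ` with `ν ≠ λ` and the diamonds `ν ⋗ ρ ⋖ λ` with `ν ≠ λ`.
Expanding `f μ = ∑_{ν ⋖ μ} f ν` over `μ ⋗ λ` and, by induction, `(|ρ| + 1) f ρ = ∑_{ν ⋗ ρ} f ν`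
over `ρ ⋖ λ`, the two diamond sums agree, leaving
`∑_{μ ⋗ λ} f μ - #{μ ⋗ λ} f λ = |λ| f λ - #{ρ ⋖ λ} f λ`.
-/

open Finset

section RankedLattice

variable {α : Type*} [Lattice α] {r : α → ℕ}

def RankCovBy (r : α → ℕ) (a b : α) : Prop := a ≤ b ∧ r b = r a + 1

theorem RankCovBy.lt {a b : α} (h : RankCovBy r a b) : a < b :=
  h.1.lt_of_ne fun hab => by simpa [hab] using h.2

theorem StrictMono.eq_of_le_of_le_apply (hr : StrictMono r) {a b : α} (h : a ≤ b)
    (h' : r b ≤ r a) : a = b :=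
  h.eq_or_lt.resolve_right fun hlt => (hr hlt).not_ge h'

theorem RankCovBy.sup_eq_and_rankCovBy_inf (hr : StrictMono r)
    (hmod : ∀ a b, r (a ⊔ b) + r (a ⊓ b) = r a + r b) {a b c : α}
    (ha : RankCovBy r a c) (hb : RankCovBy r b c) (hab : a ≠ b) :
    a ⊔ b = c ∧ RankCovBy r (a ⊓ b) a ∧ RankCovBy r (a ⊓ b) b := by
  obtain ⟨hac, hra⟩ := ha
  obtain ⟨hbc, hrb⟩ := hb
  have hlt : r a < r (a ⊔ b) := hr <| left_lt_sup.mpr fun hba =>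
    hab (hr.eq_of_le_of_le_apply hba (by omega)).symm
  have hsup : a ⊔ b = c := hr.eq_of_le_of_le_apply (sup_le hac hbc) (by omega)
  have hmod_ab := hmod a b
  rw [hsup] at hmod_ab
  exact ⟨hsup, ⟨inf_le_left, by omega⟩, ⟨inf_le_right, by omega⟩⟩

theorem RankCovBy.inf_eq_and_rankCovBy_sup (hr : StrictMono r)
    (hmod : ∀ a b, r (a ⊔ b) + r (a ⊓ b) = r a + r b) {a b c : α}
    (ha : RankCovBy r c a) (hb : RankCovBy r c b) (hab : a ≠ b) :
    a ⊓ b = c ∧ RankCovBy r a (a ⊔ b) ∧ RankCovBy r b (a ⊔ b) := by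
  obtain ⟨hca, hra⟩ := ha
  obtain ⟨hcb, hrb⟩ := hb
  have hlt : r (a ⊓ b) < r a := hr <| inf_lt_left.mpr fun hab' =>
    hab (hr.eq_of_le_of_le_apply hab' (by omega))
  have hinf : a ⊓ b = c := (hr.eq_of_le_of_le_apply (le_inf hca hcb) (by omega)).symm
  have hmod_ab := hmod a b
  rw [hinf] at hmod_ab
  exact ⟨hinf, ⟨le_sup_left, by omega⟩, ⟨le_sup_right, by omega⟩⟩

theorem sum_above_sum_below_erase_eq_sum_below_sum_above_erase [DecidableEq α] {M : Type*}
    [AddCommMonoid M]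
    (hr : StrictMono r) (hmod : ∀ a b, r (a ⊔ b) + r (a ⊓ b) = r a + r b)
    {below above : α → Finset α} (hbelow : ∀ b a, a ∈ below b ↔ RankCovBy r a b)
    (habove : ∀ a b, b ∈ above a ↔ RankCovBy r a b) (g : α → M) (l : α) :
    ∑ μ ∈ above l, ∑ ν ∈ (below μ).erase l, g ν =
      ∑ ρ ∈ below l, ∑ ν ∈ (above ρ).erase l, g ν := by
  have mem_up : ∀ p : Σ _ : α, α, p ∈ (above l).sigma (fun μ => (below μ).erase l) ↔
      RankCovBy r l p.1 ∧ p.2 ≠ l ∧ RankCovBy r p.2 p.1 := by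
    simp [hbelow, habove]
  have mem_down : ∀ p : Σ _ : α, α, p ∈ (below l).sigma (fun ρ => (above ρ).erase l) ↔
      RankCovBy r p.1 l ∧ p.2 ≠ l ∧ RankCovBy r p.1 p.2 := by
    simp [hbelow, habove]
  rw [sum_sigma', sum_sigma']
  refine sum_nbij' (fun p => ⟨l ⊓ p.2, p.2⟩) (fun p => ⟨l ⊔ p.2, p.2⟩) ?_ ?_ ?_ ?_ ?_
  · rintro ⟨μ, ν⟩ hp
    rw [mem_up] at hp
    obtain ⟨hlμ, hνl, hνμ⟩ := hp
    obtain ⟨-, hl, hν⟩ := hlμ.sup_eq_and_rankCovBy_inf hr hmod hνμ hνl.symm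
    exact (mem_down _).mpr ⟨hl, hνl, hν⟩
  · rintro ⟨ρ, ν⟩ hp
    rw [mem_down] at hp
    obtain ⟨hρl, hνl, hρν⟩ := hp
    obtain ⟨-, hl, hν⟩ := hρl.inf_eq_and_rankCovBy_sup hr hmod hρν hνl.symm
    exact (mem_up _).mpr ⟨hl, hνl, hν⟩
  · rintro ⟨μ, ν⟩ hp
    rw [mem_up] at hp
    obtain ⟨hlμ, hνl, hνμ⟩ := hp
    simp [(hlμ.sup_eq_and_rankCovBy_inf hr hmod hνμ hνl.symm).1]
  · rintro ⟨ρ, ν⟩ hp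
    rw [mem_down] at hp
    obtain ⟨hρl, hνl, hρν⟩ := hp
    simp [(hρl.inf_eq_and_rankCovBy_sup hr hmod hρν hνl.symm).1]
  · intro _ _
    rfl

theorem sum_above_eq_rank_add_one_mul [OrderBot α] [DecidableEq α] {R : Type*} [CommSemiring R]
    (hr : StrictMono r) (hr_bot : r ⊥ = 0) (hmod : ∀ a b, r (a ⊔ b) + r (a ⊓ b) = r a + r b)
    {below above : α → Finset α} (hbelow : ∀ b a, a ∈ below b ↔ RankCovBy r a b)
    (habove : ∀ a b, b ∈ above a ↔ RankCovBy r a b) (hcard : ∀ a, #(above a) = #(below a) + 1)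
    (f : α → R) (hf : ∀ b, b ≠ ⊥ → f b = ∑ a ∈ below b, f a) (l : α) :
    ∑ μ ∈ above l, f μ = (r l + 1) * f l := by
  have := hr.wellFoundedLT
  induction l using WellFoundedLT.induction with
  | ind l ih =>
  have hup : ∑ μ ∈ above l, f μ =
      #(above l) * f l + ∑ μ ∈ above l, ∑ ν ∈ (below μ).erase l, f ν := by
    rw [← nsmul_eq_mul, ← sum_const, ← sum_add_distrib]
    refine sum_congr rfl fun μ hμ => ?_
    have hlμ := (habove l μ).mp hμ
    rw [hf μ (ne_bot_of_gt hlμ.lt), add_sum_erase _ _ ((hbelow μ l).mpr hlμ)]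
  have hdown : (r l : R) * f l =
      #(below l) * f l + ∑ ρ ∈ below l, ∑ ν ∈ (above ρ).erase l, f ν := by
    have hsum_below : (r l : R) * ∑ ρ ∈ below l, f ρ = r l * f l := by
      rcases eq_or_ne l ⊥ with rfl | hl
      · simp [hr_bot]
      · rw [hf l hl]
    calc (r l : R) * f l = ∑ ρ ∈ below l, (r ρ + 1) * f ρ := by
          rw [← hsum_below, mul_sum]
          refine sum_congr rfl fun ρ hρ => ?_
          rw [((hbelow l ρ).mp hρ).2, Nat.cast_succ]
      _ = ∑ ρ ∈ below l, ∑ ν ∈ above ρ, f ν :=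
          sum_congr rfl fun ρ hρ => (ih ρ ((hbelow l ρ).mp hρ).lt).symm
      _ = ∑ ρ ∈ below l, (f l + ∑ ν ∈ (above ρ).erase l, f ν) := by
          refine sum_congr rfl fun ρ hρ => (add_sum_erase _ _ ?_).symm
          exact (habove ρ l).mpr ((hbelow l ρ).mp hρ)
      _ = _ := by rw [sum_add_distrib, sum_const, nsmul_eq_mul]
  rw [hup, sum_above_sum_below_erase_eq_sum_below_sum_above_erase hr hmod hbelow habove, hcard,
    add_one_mul (r l : R), hdown]
  push_cast
  ring

end RankedLattice

namespace YoungDiagram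

theorem card_strictMono : StrictMono YoungDiagram.card :=
  fun _ _ h => card_lt_card (cells_ssubset_iff.mpr h)

theorem card_sup_add_card_inf (μ ν : YoungDiagram) :
    (μ ⊔ ν).card + (μ ⊓ ν).card = μ.card + ν.card := by
  simp only [YoungDiagram.card, cells_sup, cells_inf]
  exact card_union_add_card_inter _ _

theorem mk_rowLen_notMem (μ : YoungDiagram) (i : ℕ) : (i, μ.rowLen i) ∉ μ := by
  simp [mem_iff_lt_rowLen]

def addableRows (μ : YoungDiagram) : Finset ℕ :=
  (range (μ.colLen 0 + 1)).filter fun i => i = 0 ∨ μ.rowLen i < μ.rowLen (i - 1)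

def removableRows (μ : YoungDiagram) : Finset ℕ :=
  (range (μ.colLen 0)).filter fun i => μ.rowLen (i + 1) < μ.rowLen i

theorem mem_addableRows {μ : YoungDiagram} {i : ℕ} :
    i ∈ addableRows μ ↔ i = 0 ∨ μ.rowLen i < μ.rowLen (i - 1) := by
  refine ⟨fun h => (mem_filter.mp h).2, fun h => mem_filter.mpr ⟨?_, h⟩⟩
  have : (i - 1, 0) ∈ μ ∨ i = 0 := by
    rcases h with h | h
    · exact .inr h
    · exact .inl (mem_iff_lt_rowLen.mpr (by omega))
  rw [mem_range, mem_iff_lt_colLen] at *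
  omega

theorem mem_removableRows {μ : YoungDiagram} {i : ℕ} :
    i ∈ removableRows μ ↔ μ.rowLen (i + 1) < μ.rowLen i := by
  refine ⟨fun h => (mem_filter.mp h).2, fun h => mem_filter.mpr ⟨?_, h⟩⟩
  rw [mem_range, ← mem_iff_lt_colLen, mem_iff_lt_rowLen]
  omega

theorem addableRows_eq_insert_zero_image_succ (μ : YoungDiagram) :
    addableRows μ = insert 0 ((removableRows μ).image Nat.succ) := by
  ext (_ | i) <;> simp [mem_addableRows, mem_removableRows]

theorem card_addableRows (μ : YoungDiagram) :
    #(addableRows μ) = #(removableRows μ) + 1 := by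
  rw [addableRows_eq_insert_zero_image_succ, card_insert_of_notMem (by simp),
    card_image_of_injective _ Nat.succ_injective]

open scoped Classical in
noncomputable def addBox (μ : YoungDiagram) (i : ℕ) : YoungDiagram :=
  if h : IsLowerSet (↑(insert (i, μ.rowLen i) μ.cells) : Set (ℕ × ℕ)) then ⟨_, h⟩ else μ

open scoped Classical in
noncomputable def eraseBox (μ : YoungDiagram) (i : ℕ) : YoungDiagram :=
  if h : IsLowerSet (↑(μ.cells.erase (i, μ.rowLen i - 1)) : Set (ℕ × ℕ)) then ⟨_, h⟩ else μ

theorem cells_addBox {μ : YoungDiagram} {i : ℕ} (hi : i ∈ addableRows μ) :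
    (addBox μ i).cells = insert (i, μ.rowLen i) μ.cells := by
  rw [mem_addableRows] at hi
  have hlower : IsLowerSet (↑(insert (i, μ.rowLen i) μ.cells) : Set (ℕ × ℕ)) := by
    rintro ⟨a, b⟩ ⟨c, d⟩ hle hab
    obtain ⟨hca, hdb⟩ := Prod.mk_le_mk.mp hle
    simp only [coe_insert, Set.mem_insert_iff, mem_coe, mem_cells, Prod.mk.injEq] at hab ⊢
    rcases hab with ⟨rfl, rfl⟩ | hab
    · rcases hdb.lt_or_eq with hdb | rfl
      · exact .inr (mem_iff_lt_rowLen.mpr (hdb.trans_le (μ.rowLen_anti _ _ hca)))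
      · rcases hca.lt_or_eq with hca | rfl
        · have := μ.rowLen_anti c (a - 1) (by omega)
          exact .inr (mem_iff_lt_rowLen.mpr (by omega))
        · exact .inl ⟨rfl, rfl⟩
    · exact .inr (μ.up_left_mem hca hdb hab)
  rw [addBox, dif_pos hlower]

theorem cells_eraseBox {μ : YoungDiagram} {i : ℕ} (hi : i ∈ removableRows μ) :
    (eraseBox μ i).cells = μ.cells.erase (i, μ.rowLen i - 1) := by
  rw [mem_removableRows] at hi
  have hlower : IsLowerSet (↑(μ.cells.erase (i, μ.rowLen i - 1)) : Set (ℕ × ℕ)) := by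
    rintro ⟨a, b⟩ ⟨c, d⟩ hle hab
    obtain ⟨hca, hdb⟩ := Prod.mk_le_mk.mp hle
    simp only [coe_erase, Set.mem_sdiff, mem_coe, mem_cells, Set.mem_singleton_iff,
      Prod.mk.injEq] at hab ⊢
    refine ⟨μ.up_left_mem hca hdb hab.1, ?_⟩
    rintro ⟨rfl, rfl⟩
    have hb := mem_iff_lt_rowLen.mp hab.1
    rcases hca.lt_or_eq with hca | rfl
    · have := μ.rowLen_anti (c + 1) a hca
      omega
    · exact hab.2 ⟨rfl, by omega⟩
  rw [eraseBox, dif_pos hlower]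

theorem exists_mem_addableRows_of_cells_eq_insert {μ ν : YoungDiagram} {c : ℕ × ℕ} (hc : c ∉ μ)
    (h : ν.cells = insert c μ.cells) : ∃ i ∈ addableRows μ, c = (i, μ.rowLen i) := by
  have mem_ν : ∀ x, x ∈ ν ↔ x = c ∨ x ∈ μ := fun x => by
    rw [← mem_cells, h, mem_insert, mem_cells]
  obtain ⟨i, j⟩ := c
  have hcν : (i, j) ∈ ν := (mem_ν _).mpr (.inl rfl)
  have hj : j = μ.rowLen i := by
    have hle : μ.rowLen i ≤ j := by rw [mem_iff_lt_rowLen] at hc; omega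
    rcases (mem_ν _).mp (ν.up_left_mem le_rfl hle hcν) with h' | h'
    · exact (Prod.mk.inj h').2.symm
    · exact absurd h' (μ.mk_rowLen_notMem i)
  subst hj
  refine ⟨i, mem_addableRows.mpr ?_, rfl⟩
  rcases Nat.eq_zero_or_pos i with hi | hi
  · exact .inl hi
  · rcases (mem_ν _).mp (ν.up_left_mem (Nat.sub_le i 1) le_rfl hcν) with h' | h'
    · simp only [Prod.mk.injEq] at h'
      omega
    · exact .inr (mem_iff_lt_rowLen.mp h')

theorem exists_mem_removableRows_of_cells_eq_erase {μ ν : YoungDiagram} {c : ℕ × ℕ} (hc : c ∈ μ)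
    (h : ν.cells = μ.cells.erase c) : ∃ i ∈ removableRows μ, c = (i, μ.rowLen i - 1) := by
  have mem_ν : ∀ x, x ∈ ν ↔ x ≠ c ∧ x ∈ μ := fun x => by
    rw [← mem_cells, h, mem_erase, mem_cells]
  have h_corner : ∀ x ∈ μ, c ≤ x → x = c := fun x hx hcx => by
    by_contra hne
    exact ((mem_ν c).mp (ν.isLowerSet hcx ((mem_ν x).mpr ⟨hne, hx⟩))).1 rfl
  obtain ⟨i, j⟩ := c
  have hj := mem_iff_lt_rowLen.mp hc
  have h_right : μ.rowLen i ≤ j + 1 := by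
    by_contra! hlt
    have := h_corner (i, j + 1) (mem_iff_lt_rowLen.mpr hlt) (by simp)
    simp at this
  have h_below : μ.rowLen (i + 1) ≤ j := by
    by_contra! hlt
    have := h_corner (i + 1, j) (mem_iff_lt_rowLen.mpr hlt) (by simp)
    simp at this
  refine ⟨i, mem_removableRows.mpr ?_, ?_⟩
  · omega
  · simp only [Prod.mk.injEq, true_and]; omega

theorem rankCovBy_card_iff_exists_addBox {μ ν : YoungDiagram} :
    RankCovBy YoungDiagram.card μ ν ↔ ∃ i ∈ addableRows μ, addBox μ i = ν := by
  constructor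
  · rintro ⟨hle, hcard⟩
    obtain ⟨c, hc, hcells⟩ :=
      exists_eq_insert_iff.mpr ⟨cells_subset_iff.mpr hle, hcard.symm⟩
    obtain ⟨i, hi, rfl⟩ := exists_mem_addableRows_of_cells_eq_insert hc hcells.symm
    exact ⟨i, hi, YoungDiagram.ext (by rw [cells_addBox hi, hcells])⟩
  · rintro ⟨i, hi, rfl⟩
    have hcells := cells_addBox hi
    refine ⟨cells_subset_iff.mp (hcells ▸ subset_insert _ _), ?_⟩
    simp only [YoungDiagram.card, hcells, card_insert_of_notMem (μ.mk_rowLen_notMem i)]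

theorem rankCovBy_card_iff_exists_eraseBox {μ ν : YoungDiagram} :
    RankCovBy YoungDiagram.card ν μ ↔ ∃ i ∈ removableRows μ, eraseBox μ i = ν := by
  constructor
  · rintro ⟨hle, hcard⟩
    obtain ⟨c, hc, hcells⟩ :=
      exists_eq_insert_iff.mpr ⟨cells_subset_iff.mpr hle, hcard.symm⟩
    have hcμ : c ∈ μ := by rw [← mem_cells, ← hcells]; exact mem_insert_self c _
    obtain ⟨i, hi, rfl⟩ := exists_mem_removableRows_of_cells_eq_erase (ν := ν) hcμ
      (by rw [← hcells, erase_insert hc])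
    exact ⟨i, hi, YoungDiagram.ext (by rw [cells_eraseBox hi, ← hcells, erase_insert hc])⟩
  · rintro ⟨i, hi, rfl⟩
    have hcells := cells_eraseBox hi
    have hmem : (i, μ.rowLen i - 1) ∈ μ.cells :=
      mem_iff_lt_rowLen.mpr (by have := mem_removableRows.mp hi; omega)
    refine ⟨cells_subset_iff.mp (hcells ▸ erase_subset _ _), ?_⟩
    simp only [YoungDiagram.card, hcells, card_erase_add_one hmem]

theorem addBox_injOn (μ : YoungDiagram) : Set.InjOn (addBox μ) (addableRows μ) := by
  intro i hi j hj hij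
  have hcells := congrArg cells hij
  rw [cells_addBox hi, cells_addBox hj, insert_inj (μ.mk_rowLen_notMem i)] at hcells
  exact (Prod.mk.inj hcells).1

theorem eraseBox_injOn (μ : YoungDiagram) : Set.InjOn (eraseBox μ) (removableRows μ) := by
  intro i hi j hj hij
  have hcells := congrArg cells hij
  have hmem : (i, μ.rowLen i - 1) ∈ μ.cells :=
    mem_iff_lt_rowLen.mpr (by have := mem_removableRows.mp hi; omega)
  rw [cells_eraseBox hi, cells_eraseBox hj, erase_inj _ hmem] at hcells
  exact (Prod.mk.inj hcells).1

theorem card_above_eq_card_below_add_one {below above : YoungDiagram → Finset YoungDiagram}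
    (hbelow : ∀ ν μ, μ ∈ below ν ↔ RankCovBy YoungDiagram.card μ ν)
    (habove : ∀ μ ν, ν ∈ above μ ↔ RankCovBy YoungDiagram.card μ ν) (μ : YoungDiagram) :
    #(above μ) = #(below μ) + 1 := by
  classical
  have h_above : above μ = (addableRows μ).image (addBox μ) := by
    ext ν
    rw [habove, rankCovBy_card_iff_exists_addBox, mem_image]
  have h_below : below μ = (removableRows μ).image (eraseBox μ) := by
    ext ν
    rw [hbelow, rankCovBy_card_iff_exists_eraseBox, mem_image]
  rw [h_above, h_below, card_image_of_injOn μ.addBox_injOn,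
    card_image_of_injOn μ.eraseBox_injOn, card_addableRows]

end YoungDiagram

theorem stmt9_general
    (below above : YoungDiagram → Finset YoungDiagram)
    (hbelow : ∀ ν μ, μ ∈ below ν ↔ μ ≤ ν ∧ ν.card = μ.card + 1)
    (habove : ∀ μ ν, ν ∈ above μ ↔ μ ≤ ν ∧ ν.card = μ.card + 1)
    (f : YoungDiagram → ℕ)
    (hf : ∀ ν, ν ≠ ⊥ → f ν = ∑ μ ∈ below ν, f μ) :
    ∀ l : YoungDiagram, (∑ μ ∈ above l, f μ) = (l.card + 1) * f l := by
  classical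
  exact sum_above_eq_rank_add_one_mul YoungDiagram.card_strictMono rfl
    YoungDiagram.card_sup_add_card_inf hbelow habove
    (YoungDiagram.card_above_eq_card_below_add_one hbelow habove) f hf

/-- For a Young diagram `λ` with `n` boxes, the numbers of standard Young
tableaux satisfy `Σ_{μ = λ + □} f μ = (n + 1) * f λ`. -/
theorem stmt9
    (below above : YoungDiagram → Finset YoungDiagram)
    (hbelow : ∀ ν μ, μ ∈ below ν ↔ μ ≤ ν ∧ ν.card = μ.card + 1)
    (habove : ∀ μ ν, ν ∈ above μ ↔ μ ≤ ν ∧ ν.card = μ.card + 1)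
    (f : YoungDiagram → ℕ)
    (hf0 : f ⊥ = 1)
    (hf : ∀ ν, ν ≠ ⊥ → f ν = ∑ μ ∈ below ν, f μ) :
    ∀ l : YoungDiagram, (∑ μ ∈ above l, f μ) = (l.card + 1) * f l :=
  stmt9_general below above hbelow habove f hf
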